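/- Let J be a nonempty proper subset of {1,…,n} and A, B ∈ ℝ^{n×n} with max(a_{ii}, b_{ii}) < 0 for all i. Then every matrix in I(A,B) is an N-matrix of the first category with respect to J if and only if I_z is an N-matrix of the first category with respect to J for all z ∈ {±1}^n with z ∉ {±e^J}, where e^J_i = 1 for i ∈ J and −1 for i ∉ J, and I_z = I_c − D_z Δ D_z. -/

import Mathlib

/-!
The forward direction holds because every `I_z` lies in the interval hull. Conversely, let
`e = e^J` and flip one coordinate of `e`: at an off-diagonal position `(i, j)` the resulting vertex
`I_z` carries the bound of the hull least favourable to the sign pattern (the upper bound inside a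
block, the lower bound across blocks), so the pattern of these vertices spreads to the whole hull;
the diagonal is covered by `max (a_ii, b_ii) < 0`.

For the N-property it suffices, the hull being connected and one vertex being an N-matrix, that no
principal submatrix of a hull matrix `C` is singular. If `C[s] x = 0` with `x ≠ 0`, either `D_e x`
is one-signed, which the entrywise negative `D_e C D_e` forbids, or the sign vector `z` of `x`
differs from `±e`. Then Rohn's inequality `x_i (I_z x)_i ≤ x_i (C x)_i = 0` says that the N-matrix
`D_z I_z D_z` reverses the sign of `|x|`, while it has a positive entry on the support of `x`. No
N-matrix can do this: making one row tight and taking the Schur complement at that row yields a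
P-matrix reversing the sign of a positive vector, which is excluded by induction on the size.
-/

open Matrix Finset

def IsPMatrix {n : ℕ} (A : Matrix (Fin n) (Fin n) ℝ) : Prop :=
  ∀ s : Finset (Fin n),
    0 < (A.submatrix (fun i : s => (i : Fin n)) (fun j : s => (j : Fin n))).det

def IsNMatrix {n : ℕ} (A : Matrix (Fin n) (Fin n) ℝ) : Prop :=
  ∀ s : Finset (Fin n), s.Nonempty →
    (A.submatrix (fun i : s => (i : Fin n)) (fun j : s => (j : Fin n))).det < 0

def IsAlmostPMatrix {n : ℕ} (A : Matrix (Fin n) (Fin n) ℝ) : Prop :=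
  (∀ s : Finset (Fin n), s.Nonempty → s ≠ Finset.univ →
    0 < (A.submatrix (fun i : s => (i : Fin n)) (fun j : s => (j : Fin n))).det) ∧
  A.det < 0

def IntervalHull {m n : ℕ} (A B : Matrix (Fin m) (Fin n) ℝ) :
    Set (Matrix (Fin m) (Fin n) ℝ) :=
  {C | ∀ i j, ∃ t : ℝ, t ∈ Set.Icc (0:ℝ) 1 ∧ C i j = t * A i j + (1 - t) * B i j}

noncomputable def Iu {m n : ℕ} (A B : Matrix (Fin m) (Fin n) ℝ) : Matrix (Fin m) (Fin n) ℝ :=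
  fun i j => max (A i j) (B i j)

noncomputable def Il {m n : ℕ} (A B : Matrix (Fin m) (Fin n) ℝ) : Matrix (Fin m) (Fin n) ℝ :=
  fun i j => min (A i j) (B i j)

noncomputable def Ic {m n : ℕ} (A B : Matrix (Fin m) (Fin n) ℝ) : Matrix (Fin m) (Fin n) ℝ :=
  fun i j => (A i j + B i j) / 2

noncomputable def Dlt {m n : ℕ} (A B : Matrix (Fin m) (Fin n) ℝ) : Matrix (Fin m) (Fin n) ℝ :=
  fun i j => (Iu A B i j - Il A B i j) / 2

noncomputable def Iz {n : ℕ} (A B : Matrix (Fin n) (Fin n) ℝ) (z : Fin n → ℝ) :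
    Matrix (Fin n) (Fin n) ℝ :=
  Ic A B - Matrix.diagonal z * Dlt A B * Matrix.diagonal z

def SignVec {n : ℕ} (z : Fin n → ℝ) : Prop := ∀ i, z i = 1 ∨ z i = -1

def BlockPattern {n : ℕ} (A : Matrix (Fin n) (Fin n) ℝ) (J : Finset (Fin n)) : Prop :=
  (∀ i ∈ J, ∀ j ∈ J, A i j < 0) ∧ (∀ i ∉ J, ∀ j ∉ J, A i j < 0) ∧
  (∀ i ∈ J, ∀ j ∉ J, 0 < A i j) ∧ (∀ i ∉ J, ∀ j ∈ J, 0 < A i j)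

def IsNMatrixSecond {n : ℕ} (A : Matrix (Fin n) (Fin n) ℝ) : Prop :=
  IsNMatrix A ∧ ∀ i j, A i j ≤ 0

def IsNMatrixFirst {n : ℕ} (A : Matrix (Fin n) (Fin n) ℝ) (J : Finset (Fin n)) : Prop :=
  IsNMatrix A ∧ BlockPattern A J

def IsAlmostPSecond {n : ℕ} (A : Matrix (Fin n) (Fin n) ℝ) : Prop :=
  IsUnit A.det ∧ IsNMatrix A⁻¹ ∧ ∀ i j, A⁻¹ i j < 0

def IsAlmostPFirst {n : ℕ} (A : Matrix (Fin n) (Fin n) ℝ) (J : Finset (Fin n)) : Prop :=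
  IsUnit A.det ∧ IsNMatrixFirst A⁻¹ J

def InJ {n : ℕ} (J : Finset (Fin n)) (x : Fin n → ℝ) : Prop :=
  (∀ j ∈ J, 0 < x j) ∧ (∀ j ∉ J, x j < 0)

def Semipos {p q : Type*} [Fintype q] (M : Matrix p q ℝ) : Prop :=
  ∃ x : q → ℝ, (∀ j, 0 ≤ x j) ∧ ∀ i, 0 < M.mulVec x i

def MinSemipos {m n : ℕ} (M : Matrix (Fin m) (Fin n) ℝ) : Prop :=
  Semipos M ∧
  ∀ j₀ : Fin n, ¬ Semipos (M.submatrix id (fun j : {j : Fin n // j ≠ j₀} => (j : Fin n)))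

section PrincipalMinors

variable {ι : Type*}

-- Principal submatrices indexed by injective tuples rather than finsets, so that bordering by
-- one index is `Fin.snoc`.
def PosPrincipalMinors (M : Matrix ι ι ℝ) : Prop :=
  ∀ (k : ℕ) (f : Fin k → ι), Function.Injective f → 0 < (M.submatrix f f).det

def NegPrincipalMinors (M : Matrix ι ι ℝ) : Prop :=
  ∀ (k : ℕ) (f : Fin (k + 1) → ι), Function.Injective f → (M.submatrix f f).det < 0

lemma PosPrincipalMinors.diag_pos {M : Matrix ι ι ℝ} (hM : PosPrincipalMinors M) (p : ι) :
    0 < M p p := by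
  simpa using hM 1 (fun _ => p) (Function.injective_of_subsingleton _)

lemma NegPrincipalMinors.diag_neg {M : Matrix ι ι ℝ} (hM : NegPrincipalMinors M) (p : ι) :
    M p p < 0 := by
  simpa using hM 0 (fun _ => p) fun a b _ => Subsingleton.elim (α := Fin 1) a b

lemma NegPrincipalMinors.submatrix {κ : Type*} {M : Matrix ι ι ℝ} (hM : NegPrincipalMinors M)
    {g : κ → ι} (hg : Function.Injective g) :
    NegPrincipalMinors (M.submatrix g g) :=
  fun k f hf => hM k (g ∘ f) (hg.comp hf)

noncomputable def schurComplement (M : Matrix ι ι ℝ) (p : ι) :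
    Matrix {i // i ≠ p} {i // i ≠ p} ℝ :=
  fun i j => M i j - M i p * M p j / M p p

lemma det_submatrix_snoc (M : Matrix ι ι ℝ) {p : ι} (hp : M p p ≠ 0)
    {k : ℕ} (f : Fin k → {i // i ≠ p}) :
    (M.submatrix (Fin.snoc (Subtype.val ∘ f) p) (Fin.snoc (Subtype.val ∘ f) p)).det
      = M p p * ((schurComplement M p).submatrix f f).det := by
  let D : Matrix (Fin 1) (Fin 1) ℝ := of fun _ _ => M p p
  have hdetD : D.det = M p p := det_fin_one _
  have : Invertible D.det := hdetD ▸ invertibleOfNonzero hp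
  have : Invertible D := invertibleOfDetInvertible D
  have hinvD : ⅟D = (M p p)⁻¹ • (1 : Matrix (Fin 1) (Fin 1) ℝ) := by
    rw [invOf_eq_nonsing_inv, Matrix.inv_def, adjugate_fin_one, hdetD, Ring.inverse_eq_inv']
  have hcast (a : Fin k) : finSumFinEquiv.symm (Fin.castSucc a) = (Sum.inl a : Fin k ⊕ Fin 1) := by
    rw [Equiv.symm_apply_eq, finSumFinEquiv_apply_left]
    rfl
  have hlast : finSumFinEquiv.symm (Fin.last k) = (Sum.inr 0 : Fin k ⊕ Fin 1) := by
    rw [Equiv.symm_apply_eq, finSumFinEquiv_apply_right]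
    rfl
  have hblocks : M.submatrix (Fin.snoc (Subtype.val ∘ f) p) (Fin.snoc (Subtype.val ∘ f) p)
      = (fromBlocks (of fun a b => M (f a) (f b)) (of fun a _ => M (f a) p)
          (of fun _ b => M p (f b)) D).submatrix finSumFinEquiv.symm finSumFinEquiv.symm := by
    ext x y
    induction x using Fin.lastCases <;> induction y using Fin.lastCases <;>
      simp [hcast, hlast, D]
  rw [hblocks, det_submatrix_equiv_self, det_fromBlocks₂₂, hdetD, hinvD]
  congr 2
  ext a b
  simp [schurComplement, mul_apply]
  ring

lemma PosPrincipalMinors.schurComplement {M : Matrix ι ι ℝ}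
    (hM : PosPrincipalMinors M) (p : ι) : PosPrincipalMinors (schurComplement M p) := by
  intro k f hf
  have h := hM (k + 1) _ (Fin.snoc_injective_of_injective (Subtype.val_injective.comp hf)
    (by rintro ⟨a, ha⟩; exact (f a).2 ha))
  rw [det_submatrix_snoc M (hM.diag_pos p).ne'] at h
  exact pos_of_mul_pos_right h (hM.diag_pos p).le

lemma NegPrincipalMinors.schurComplement {M : Matrix ι ι ℝ}
    (hM : NegPrincipalMinors M) (p : ι) : PosPrincipalMinors (schurComplement M p) := by
  intro k f hf
  have h := hM k _ (Fin.snoc_injective_of_injective (Subtype.val_injective.comp hf)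
    (by rintro ⟨a, ha⟩; exact (f a).2 ha))
  rw [det_submatrix_snoc M (hM.diag_neg p).ne] at h
  exact pos_of_mul_neg_right h (hM.diag_neg p).le

variable [Fintype ι] [DecidableEq ι]

lemma NegPrincipalMinors.diagonal_mul_mul_diagonal {M : Matrix ι ι ℝ}
    (hM : NegPrincipalMinors M) {z : ι → ℝ} (hz : z * z = 1) :
    NegPrincipalMinors (diagonal z * M * diagonal z) := by
  intro k f hf
  have hsub : (diagonal z * M * diagonal z).submatrix f f
      = diagonal (z ∘ f) * M.submatrix f f * diagonal (z ∘ f) := by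
    ext a b
    simp [diagonal_mul, mul_diagonal]
  have hsq : (∏ a, (z ∘ f) a) * ∏ a, (z ∘ f) a = 1 := by
    rw [← Finset.prod_mul_distrib]
    exact Finset.prod_eq_one fun a _ => congrFun hz (f a)
  rw [hsub, det_mul, det_mul, det_diagonal, mul_right_comm, hsq, one_mul]
  exact hM k f hf

lemma mul_mulVec_diagonal_mul_mul_diagonal (M : Matrix ι ι ℝ) {z : ι → ℝ} (hz : z * z = 1)
    (x : ι → ℝ) (i : ι) :
    (z * x) i * ((diagonal z * M * diagonal z) *ᵥ (z * x)) i = x i * (M *ᵥ x) i := by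
  have hdiag (v : ι → ℝ) : diagonal z *ᵥ v = z * v := funext (mulVec_diagonal z v)
  have hzx : diagonal z *ᵥ (z * x) = x := by rw [hdiag, ← mul_assoc, hz, one_mul]
  rw [← mulVec_mulVec, ← mulVec_mulVec, hzx, hdiag]
  have hzi : z i * z i = 1 := by simpa using congrFun hz i
  simp only [Pi.mul_apply]
  linear_combination (x i * (M *ᵥ x) i) * hzi

lemma schurComplement_mulVec (M : Matrix ι ι ℝ) {p : ι} (hp : M p p ≠ 0) {w : ι → ℝ}
    (hw : (M *ᵥ w) p = 0) (i : {i // i ≠ p}) :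
    (schurComplement M p *ᵥ fun j => w j) i = (M *ᵥ w) i := by
  have hsplit (r : ι) : (M *ᵥ w) r = M r p * w p + ∑ j : {j // j ≠ p}, M r j * w j := by
    rw [mulVec, dotProduct, Fintype.sum_eq_add_sum_subtype_ne _ p]
  have hrow : ∑ j : {j // j ≠ p}, M p j * w j = -(M p p * w p) := by
    linarith [hsplit p]
  have hcol : ∑ j : {j // j ≠ p}, M i p * M p j / M p p * w j = -(M i p * w p) := by
    simp_rw [mul_div_right_comm, mul_assoc, ← Finset.mul_sum, hrow]
    field_simp
  rw [hsplit i]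
  simp only [mulVec, dotProduct, schurComplement, sub_mul, Finset.sum_sub_distrib, hcol]
  ring

-- Raise `w j` until the first row with a positive entry in column `j` becomes tight.
lemma exists_tight_of_mulVec_nonpos (M : Matrix ι ι ℝ) {w : ι → ℝ}
    (hw : ∀ i, 0 < w i) (hMw : ∀ i, (M *ᵥ w) i ≤ 0) {i₀ j : ι} (h₀ : 0 < M i₀ j) :
    ∃ p w', (∀ i, 0 < w' i) ∧ (∀ i, (M *ᵥ w') i ≤ 0) ∧ (M *ᵥ w') p = 0 ∧ 0 < M p j := by
  let I := univ.filter fun i => 0 < M i j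
  obtain ⟨p, hpI, hpmin⟩ := I.exists_min_image (fun i => -(M *ᵥ w) i / M i j)
    ⟨i₀, by simpa [I] using h₀⟩
  have hpj : 0 < M p j := by simpa [I] using hpI
  set t := -(M *ᵥ w) p / M p j
  have ht : 0 ≤ t := div_nonneg (by linarith [hMw p]) hpj.le
  have hMw' (i : ι) : (M *ᵥ (w + Pi.single j t)) i = (M *ᵥ w) i + M i j * t := by
    simp [mulVec_add, mul_comm]
  refine ⟨p, w + Pi.single j t, fun i => ?_, fun i => ?_, ?_, hpj⟩
  · rcases eq_or_ne i j with rfl | hij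
    · simpa using add_pos_of_pos_of_nonneg (hw i) ht
    · simpa [hij] using hw i
  · rw [hMw']
    rcases le_or_gt (M i j) 0 with hij | hij
    · nlinarith [hMw i]
    · have := (le_div_iff₀ hij).mp (hpmin i (by simpa [I] using hij))
      nlinarith
  · rw [hMw', mul_div_cancel₀ _ hpj.ne']
    ring

lemma PosPrincipalMinors.exists_mulVec_pos [Nonempty ι]
    {M : Matrix ι ι ℝ} (hM : PosPrincipalMinors M) {w : ι → ℝ} (hw : ∀ i, 0 < w i) :
    ∃ i, 0 < (M *ᵥ w) i := by
  induction hcard : Fintype.card ι using Nat.strong_induction_on generalizing ι with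
  | _ N ih =>
  by_contra! hMw
  obtain ⟨j⟩ := ‹Nonempty ι›
  obtain ⟨p, w', hw', hMw', hp, -⟩ := exists_tight_of_mulVec_nonpos M hw hMw (hM.diag_pos j)
  have hpp := hM.diag_pos p
  by_cases hrest : Nonempty {i // i ≠ p}
  · obtain ⟨i, hi⟩ := ih _ (hcard ▸ Fintype.card_subtype_lt (p := (· ≠ p)) (x := p) (by simp))
      (hM.schurComplement p) (fun i => hw' i) rfl
    rw [schurComplement_mulVec M hpp.ne' hp] at hi
    linarith [hMw' i]
  · have hsingle : (M *ᵥ w') p = M p p * w' p := by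
      rw [mulVec, dotProduct, Fintype.sum_eq_single p fun i hi => (hrest ⟨⟨i, hi⟩⟩).elim]
    nlinarith [hw' p]

lemma NegPrincipalMinors.exists_mulVec_pos {M : Matrix ι ι ℝ}
    (hM : NegPrincipalMinors M) {i₀ j₀ : ι} (hpos : 0 < M i₀ j₀) {w : ι → ℝ}
    (hw : ∀ i, 0 < w i) : ∃ i, 0 < (M *ᵥ w) i := by
  by_contra! hMw
  obtain ⟨p, w', hw', hMw', hp, hpj⟩ := exists_tight_of_mulVec_nonpos M hw hMw hpos
  have hpp := hM.diag_neg p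
  have hj₀ : j₀ ≠ p := by rintro rfl; linarith
  have : Nonempty {i // i ≠ p} := ⟨⟨j₀, hj₀⟩⟩
  obtain ⟨i, hi⟩ := (hM.schurComplement p).exists_mulVec_pos (w := fun i => w' i) fun i => hw' i
  rw [schurComplement_mulVec M hpp.ne hp] at hi
  linarith [hMw' i]

lemma NegPrincipalMinors.exists_mul_mulVec_pos {M : Matrix ι ι ℝ}
    (hM : NegPrincipalMinors M) {v : ι → ℝ} (hv : ∀ i, 0 ≤ v i) {i₀ j₀ : ι}
    (hi₀ : 0 < v i₀) (hj₀ : 0 < v j₀) (hpos : 0 < M i₀ j₀) : ∃ i, 0 < v i * (M *ᵥ v) i := by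
  have hsupp (i : {i // 0 < v i}) :
      (M.submatrix Subtype.val Subtype.val *ᵥ fun j : {j // 0 < v j} => v j) i = (M *ᵥ v) i := by
    simp only [mulVec, dotProduct, submatrix_apply]
    rw [← Fintype.sum_subtype_add_sum_subtype (fun j => 0 < v j), left_eq_add]
    exact Finset.sum_eq_zero fun j _ => by rw [le_antisymm (not_lt.mp j.2) (hv j), mul_zero]
  obtain ⟨i, hi⟩ := (hM.submatrix Subtype.val_injective).exists_mulVec_pos
    (i₀ := (⟨i₀, hi₀⟩ : {i // 0 < v i})) (j₀ := ⟨j₀, hj₀⟩) hpos (w := fun j => v j) fun j => j.2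
  exact ⟨i, mul_pos i.2 (hsupp i ▸ hi)⟩

lemma exists_ne_zero_mul_mulVec_eq_zero_of_det_submatrix {M : Matrix ι ι ℝ} {s : Finset ι}
    (h : (M.submatrix ((↑) : s → ι) (↑)).det = 0) :
    ∃ x : ι → ℝ, x ≠ 0 ∧ ∀ i, x i * (M *ᵥ x) i = 0 := by
  obtain ⟨y, hy0, hy⟩ := exists_mulVec_eq_zero_iff.mpr h
  let x : ι → ℝ := fun i => if hi : i ∈ s then y ⟨i, hi⟩ else 0
  refine ⟨x, fun hx => hy0 (funext fun j => by simpa [x] using congrFun hx j), fun i => ?_⟩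
  by_cases hi : i ∈ s
  · have hrestrict : (M *ᵥ x) i = (M.submatrix ((↑) : s → ι) (↑) *ᵥ y) ⟨i, hi⟩ :=
      calc (M *ᵥ x) i = ∑ j ∈ s, M i j * x j :=
            (Finset.sum_subset (subset_univ s) fun j _ hj => by simp [x, hj]).symm
        _ = ∑ j : s, M i j * y j := by rw [← Finset.sum_coe_sort]; simp [x]
    rw [hrestrict, hy, Pi.zero_apply, mul_zero]
  · simp [x, hi]

omit [DecidableEq ι] in
lemma eq_zero_of_nonneg_of_mul_mulVec_eq_zero {M : Matrix ι ι ℝ} (hM : ∀ i j, M i j ≤ 0)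
    (hdiag : ∀ i, M i i < 0) {y : ι → ℝ} (hy : ∀ i, 0 ≤ y i)
    (hMy : ∀ i, y i * (M *ᵥ y) i = 0) : y = 0 := by
  by_contra hne
  obtain ⟨j, hj⟩ := Function.ne_iff.mp hne
  have hyj : 0 < y j := (hy j).lt_of_ne' hj
  have hMyj : (M *ᵥ y) j < 0 :=
    Finset.sum_neg' (fun k _ => mul_nonpos_of_nonpos_of_nonneg (hM j k) (hy k))
      ⟨j, mem_univ j, mul_neg_of_neg_of_pos (hdiag j) hyj⟩
  exact (mul_neg_of_pos_of_neg hyj hMyj).ne (hMy j)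

end PrincipalMinors

lemma IsNMatrix.negPrincipalMinors {n : ℕ} {A : Matrix (Fin n) (Fin n) ℝ} (hA : IsNMatrix A) :
    NegPrincipalMinors A := by
  intro k f hf
  let s : Finset (Fin n) := univ.image f
  let e : Fin (k + 1) ≃ s :=
    (Equiv.ofInjective f hf).trans (Equiv.subtypeEquivRight fun x => by simp [s])
  have hsub : A.submatrix f f = (A.submatrix ((↑) : s → Fin n) (↑)).submatrix e e := rfl
  rw [hsub, det_submatrix_equiv_self]
  exact hA s (univ_nonempty.image f)

section IntervalHull

variable {m n : ℕ}

lemma Ic_sub_Dlt (A B : Matrix (Fin m) (Fin n) ℝ) (i j) :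
    Ic A B i j - Dlt A B i j = Il A B i j := by
  simp only [Ic, Dlt, Iu, Il]
  linarith [min_add_max (A i j) (B i j)]

lemma Ic_add_Dlt (A B : Matrix (Fin m) (Fin n) ℝ) (i j) :
    Ic A B i j + Dlt A B i j = Iu A B i j := by
  simp only [Ic, Dlt, Iu, Il]
  linarith [min_add_max (A i j) (B i j)]

lemma mem_IntervalHull_iff {A B C : Matrix (Fin m) (Fin n) ℝ} :
    C ∈ IntervalHull A B ↔ ∀ i j, Il A B i j ≤ C i j ∧ C i j ≤ Iu A B i j := by
  have hseg (i j) : (∃ t ∈ Set.Icc (0 : ℝ) 1, C i j = t * A i j + (1 - t) * B i j) ↔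
      C i j ∈ Set.uIcc (A i j) (B i j) := by
    rw [Set.uIcc_comm, ← segment_eq_uIcc, segment_eq_image]
    simp only [Set.mem_image, smul_eq_mul, eq_comm, add_comm]
  exact forall₂_congr fun i j => (hseg i j).trans Set.mem_Icc

lemma convex_IntervalHull (A B : Matrix (Fin m) (Fin n) ℝ) : Convex ℝ (IntervalHull A B) := by
  intro X hX Y hY a b ha hb hab
  rw [mem_IntervalHull_iff] at hX hY ⊢
  intro i j
  obtain ⟨hXl, hXu⟩ := hX i j
  obtain ⟨hYl, hYu⟩ := hY i j
  obtain rfl : b = 1 - a := by linarith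
  simp only [Matrix.add_apply, Matrix.smul_apply, smul_eq_mul]
  constructor
  · nlinarith [mul_nonneg ha (sub_nonneg.2 hXl), mul_nonneg hb (sub_nonneg.2 hYl)]
  · nlinarith [mul_nonneg ha (sub_nonneg.2 hXu), mul_nonneg hb (sub_nonneg.2 hYu)]

end IntervalHull

section SignVec

variable {n : ℕ} {z : Fin n → ℝ}

lemma SignVec.mul_self_apply (hz : SignVec z) (i : Fin n) :
    z i * z i = 1 := by
  rcases hz i with h | h <;> simp [h]

lemma SignVec.mul_self (hz : SignVec z) : z * z = 1 :=
  funext hz.mul_self_apply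

lemma SignVec.update_neg (hz : SignVec z) (j : Fin n) :
    SignVec (Function.update z j (-z j)) := by
  intro i
  rcases eq_or_ne i j with rfl | hij
  · rcases hz i with h | h <;> simp [h]
  · simpa [hij] using hz i

lemma SignVec.apply_ne_neg (hz : SignVec z) (i : Fin n) :
    z i ≠ -z i := by
  rcases hz i with h | h <;> rw [h] <;> norm_num

lemma SignVec.update_neg_ne (hz : SignVec z) (j : Fin n) :
    Function.update z j (-z j) ≠ z :=
  fun h => hz.apply_ne_neg j (by simpa using (congrFun h j).symm)

lemma SignVec.update_neg_ne_neg (hz : SignVec z) {i j : Fin n}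
    (hij : i ≠ j) : Function.update z j (-z j) ≠ -z :=
  fun h => hz.apply_ne_neg i (by simpa [hij] using congrFun h i)

end SignVec

section Iz

variable {n : ℕ} {A B C : Matrix (Fin n) (Fin n) ℝ} {z : Fin n → ℝ}

lemma Iz_apply (A B : Matrix (Fin n) (Fin n) ℝ) (z : Fin n → ℝ) (i j : Fin n) :
    Iz A B z i j = Ic A B i j - z i * Dlt A B i j * z j := by
  simp [Iz, mul_diagonal, diagonal_mul]

lemma Iz_mem_IntervalHull (A B : Matrix (Fin n) (Fin n) ℝ) (hz : SignVec z) :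
    Iz A B z ∈ IntervalHull A B := by
  rw [mem_IntervalHull_iff]
  intro i j
  have hle : Il A B i j ≤ Iu A B i j := min_le_max
  rw [Iz_apply]
  rcases hz i with hi | hi <;> rcases hz j with hj | hj <;> simp only [hi, hj] <;>
    constructor <;> linarith [Ic_sub_Dlt A B i j, Ic_add_Dlt A B i j]

lemma mul_Iz_mul_le (hz : SignVec z) (hC : C ∈ IntervalHull A B) (i j : Fin n) :
    z i * Iz A B z i j * z j ≤ z i * C i j * z j := by
  obtain ⟨hl, hu⟩ := mem_IntervalHull_iff.mp hC i j
  rw [Iz_apply]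
  rcases hz i with hi | hi <;> rcases hz j with hj | hj <;> simp only [hi, hj] <;>
    linarith [Ic_sub_Dlt A B i j, Ic_add_Dlt A B i j]

lemma mul_Iz_mulVec_le (hz : SignVec z) (hC : C ∈ IntervalHull A B) {x : Fin n → ℝ}
    (hzx : ∀ i, 0 ≤ z i * x i) (i : Fin n) :
    x i * (Iz A B z *ᵥ x) i ≤ x i * (C *ᵥ x) i := by
  simp only [mulVec, dotProduct, Finset.mul_sum]
  refine Finset.sum_le_sum fun j _ => ?_
  have key := mul_le_mul_of_nonneg_left (mul_Iz_mul_le hz hC i j)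
    (mul_nonneg (hzx i) (hzx j))
  linear_combination key - x i * x j * (Iz A B z i j - C i j) *
    (hz.mul_self_apply i + z i ^ 2 * hz.mul_self_apply j)

end Iz

section BlockSign

variable {n : ℕ} {J : Finset (Fin n)}

def blockSign (J : Finset (Fin n)) : Fin n → ℝ := fun i => if i ∈ J then 1 else -1

lemma signVec_blockSign (J : Finset (Fin n)) : SignVec (blockSign J) := by
  intro i
  by_cases hi : i ∈ J <;> simp [blockSign, hi]

lemma neg_blockSign (J : Finset (Fin n)) :
    -blockSign J = fun i => if i ∈ J then (-1 : ℝ) else 1 := by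
  funext i
  by_cases hi : i ∈ J <;> simp [blockSign, hi]

lemma blockPattern_iff {C : Matrix (Fin n) (Fin n) ℝ} :
    BlockPattern C J ↔ ∀ i j, blockSign J i * C i j * blockSign J j < 0 := by
  constructor
  · rintro ⟨hJJ, hJcJc, hJJc, hJcJ⟩ i j
    by_cases hi : i ∈ J <;> by_cases hj : j ∈ J <;> simp [blockSign, hi, hj]
    · exact hJJ i hi j hj
    · exact hJJc i hi j hj
    · exact hJcJ i hi j hj
    · exact hJcJc i hi j hj
  · intro h
    refine ⟨fun i hi j hj => ?_, fun i hi j hj => ?_, fun i hi j hj => ?_, fun i hi j hj => ?_⟩ <;>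
      simpa [blockSign, hi, hj] using h i j

end BlockSign

section Vertices

variable {n : ℕ} {J : Finset (Fin n)} {A B C : Matrix (Fin n) (Fin n) ℝ}

lemma blockPattern_of_mem_IntervalHull (hd : ∀ i, max (A i i) (B i i) < 0)
    (hIz : ∀ z, SignVec z → z ≠ blockSign J → z ≠ -blockSign J → BlockPattern (Iz A B z) J)
    (hC : C ∈ IntervalHull A B) : BlockPattern C J := by
  have he := signVec_blockSign J
  rw [blockPattern_iff]
  intro i j
  rcases eq_or_ne i j with rfl | hij
  · rw [mul_right_comm, he.mul_self_apply, one_mul]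
    exact (mem_IntervalHull_iff.mp hC i i).2.trans_lt (hd i)
  · have hz := he.update_neg j
    have hIzij := blockPattern_iff.mp
      (hIz _ hz (he.update_neg_ne j) (he.update_neg_ne_neg hij)) i j
    have hle := mul_Iz_mul_le hz hC i j
    simp only [Function.update_self, Function.update_of_ne hij] at hIzij hle
    linarith

lemma eq_zero_of_blockSign_mul_nonneg (hCJ : BlockPattern C J) {x : Fin n → ℝ}
    (hx : ∀ i, x i * (C *ᵥ x) i = 0) (hex : ∀ i, 0 ≤ (blockSign J * x) i) : x = 0 := by
  have he := signVec_blockSign J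
  have hCe := blockPattern_iff.mp hCJ
  have hex0 := eq_zero_of_nonneg_of_mul_mulVec_eq_zero
    (M := diagonal (blockSign J) * C * diagonal (blockSign J))
    (fun i j => by simpa [diagonal_mul, mul_diagonal] using (hCe i j).le)
    (fun i => by simpa [diagonal_mul, mul_diagonal] using hCe i i) hex
    (fun i => by rw [mul_mulVec_diagonal_mul_mul_diagonal C he.mul_self, hx])
  rw [← one_mul x, ← he.mul_self, mul_assoc, hex0, mul_zero]

lemma eq_zero_of_mul_mulVec_eq_zero_of_mem_IntervalHull
    (hIz : ∀ z, SignVec z → z ≠ blockSign J → z ≠ -blockSign J → IsNMatrixFirst (Iz A B z) J)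
    (hC : C ∈ IntervalHull A B) (hCJ : BlockPattern C J) {x : Fin n → ℝ}
    (hx : ∀ i, x i * (C *ᵥ x) i = 0) : x = 0 := by
  set e := blockSign J
  have he : SignVec e := signVec_blockSign J
  by_cases hpos : ∀ i, 0 ≤ (e * x) i
  · exact eq_zero_of_blockSign_mul_nonneg hCJ hx hpos
  by_cases hneg : ∀ i, (e * x) i ≤ 0
  · exact neg_eq_zero.mp <| eq_zero_of_blockSign_mul_nonneg hCJ
      (fun i => by simpa [mulVec_neg] using hx i) fun i => by simpa using hneg i
  simp only [not_forall, not_le] at hpos hneg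
  obtain ⟨i₂, hi₂⟩ := hpos
  obtain ⟨i₁, hi₁⟩ := hneg
  -- `z` is the sign pattern of `x`, completed by `e` where `x` vanishes.
  let z : Fin n → ℝ := fun i => if 0 ≤ e i * x i then e i else -e i
  have hz : SignVec z := fun i => by
    by_cases h : 0 ≤ e i * x i
    · simpa only [z, if_pos h] using he i
    · simpa only [z, if_neg h, neg_eq_iff_eq_neg, neg_neg] using (he i).symm
  have hzx (i) : 0 ≤ z i * x i := by
    by_cases h : 0 ≤ e i * x i
    · simpa only [z, if_pos h] using h
    · simp only [z, if_neg h]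
      linarith
  have hz₁ : z i₁ = e i₁ := if_pos (le_of_lt (by simpa using hi₁))
  have hz₂ : z i₂ = -e i₂ := if_neg (not_le.mpr (by simpa using hi₂))
  have hze : z ≠ e := fun h => he.apply_ne_neg i₂ (by simpa [hz₂] using (congrFun h i₂).symm)
  have hzne : z ≠ -e := fun h => he.apply_ne_neg i₁ (by simpa [hz₁] using congrFun h i₁)
  obtain ⟨hN, hBP⟩ := hIz z hz hze hzne
  have hentry : 0 < (diagonal z * Iz A B z * diagonal z) i₁ i₂ := by
    have := blockPattern_iff.mp hBP i₁ i₂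
    simp only [diagonal_mul, mul_diagonal, hz₁, hz₂]
    linarith
  have hM := hN.negPrincipalMinors.diagonal_mul_mul_diagonal hz.mul_self
  obtain ⟨i, hi⟩ := hM.exists_mul_mulVec_pos (v := z * x) hzx
    (by simpa [hz₁] using hi₁) (by simpa [hz₂] using hi₂) hentry
  rw [mul_mulVec_diagonal_mul_mul_diagonal _ hz.mul_self] at hi
  linarith [mul_Iz_mulVec_le hz hC hzx i, hx i]

end Vertices

lemma det_submatrix_neg_of_mem_IntervalHull {m : ℕ} {A B Z C : Matrix (Fin m) (Fin m) ℝ}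
    {s : Finset (Fin m)}
    (hne : ∀ C ∈ IntervalHull A B, (C.submatrix ((↑) : s → Fin m) (↑)).det ≠ 0)
    (hZ : Z ∈ IntervalHull A B) (hZs : (Z.submatrix ((↑) : s → Fin m) (↑)).det < 0)
    (hC : C ∈ IntervalHull A B) : (C.submatrix ((↑) : s → Fin m) (↑)).det < 0 := by
  by_contra! hCs
  obtain ⟨C', hC', hC's⟩ := (convex_IntervalHull A B).isPreconnected.intermediate_value hZ hC
    (continuous_id.matrix_submatrix _ _).matrix_det.continuousOn ⟨hZs.le, hCs⟩
  exact hne C' hC' hC's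

theorem stmt9 {n : ℕ} (J : Finset (Fin n)) (hJ : J.Nonempty) (hJ2 : J ≠ Finset.univ)
    (A B : Matrix (Fin n) (Fin n) ℝ) (hd : ∀ i, max (A i i) (B i i) < 0) :
    (∀ C ∈ IntervalHull A B, IsNMatrixFirst C J) ↔
      ∀ z : Fin n → ℝ, SignVec z →
        z ≠ (fun i => if i ∈ J then (1:ℝ) else -1) →
        z ≠ (fun i => if i ∈ J then (-1:ℝ) else 1) →
        IsNMatrixFirst (Iz A B z) J := by
  refine ⟨fun h z hz _ _ => h _ (Iz_mem_IntervalHull A B hz), fun h => ?_⟩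
  rw [← neg_blockSign] at h
  have hBP (C) (hC : C ∈ IntervalHull A B) : BlockPattern C J :=
    blockPattern_of_mem_IntervalHull hd (fun z hz h₁ h₂ => (h z hz h₁ h₂).2) hC
  obtain ⟨a, ha⟩ := hJ
  obtain ⟨b, hb⟩ : ∃ b, b ∉ J := by simpa [eq_univ_iff_forall] using hJ2
  have he := signVec_blockSign J
  have hab : a ≠ b := by rintro rfl; exact hb ha
  obtain ⟨hZ, -⟩ := h _ (he.update_neg b) (he.update_neg_ne b) (he.update_neg_ne_neg hab)
  intro C hC
  refine ⟨fun s hs => det_submatrix_neg_of_mem_IntervalHull (fun C' hC' hC's => ?_)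
    (Iz_mem_IntervalHull A B (he.update_neg b)) (hZ s hs) hC, hBP C hC⟩
  obtain ⟨x, hx0, hx⟩ := exists_ne_zero_mul_mulVec_eq_zero_of_det_submatrix hC's
  exact hx0 (eq_zero_of_mul_mulVec_eq_zero_of_mem_IntervalHull h hC' (hBP C' hC') hx)
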